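/- Let U ⊆ ℝ² be open, ω : U → ℝ smooth, and p : U → ℍ a smooth map into the unit quaternions satisfying ⟨p_u,p_u⟩ = ⟨p_v,p_v⟩ = 2e^ω, ⟨p_u,p_v⟩ = 0 and p_uu + p_vv = −4e^ω p, with unit normal N = p · ((p⁻¹p_u) × (p⁻¹p_v))/(2e^ω). Define φ = ¼⟨p_uu − p_vv, N⟩ and ψ = −½⟨p_uv, N⟩. Then φ and ψ satisfy the Cauchy–Riemann equations φ_u = ψ_v and φ_v = −ψ_u; i.e. the Hopf differential coefficient σ(∂z,∂z) = φ + iψ is a holomorphic function of z = u + iv. -/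

import Mathlib

noncomputable section

open Quaternion
open scoped RealInnerProductSpace

/-- Euclidean inner product on the quaternions: `⟨x,y⟩ = Re (x * star y)`. -/
def ipQ (x y : ℍ[ℝ]) : ℝ := (x * star y).re

/-- Cross product of (imaginary) quaternions: `α × β = ½(αβ − βα)`. -/
def crossQ (a b : ℍ[ℝ]) : ℍ[ℝ] := (1 / 2 : ℝ) • (a * b - b * a)

/-- Partial derivative in the first coordinate direction of `ℝ²`. -/
def pdu {E : Type*} [NormedAddCommGroup E] [NormedSpace ℝ E]
    (f : ℝ × ℝ → E) (x : ℝ × ℝ) : E := fderiv ℝ f x (1, 0)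

/-- Partial derivative in the second coordinate direction of `ℝ²`. -/
def pdv {E : Type*} [NormedAddCommGroup E] [NormedSpace ℝ E]
    (f : ℝ × ℝ → E) (x : ℝ × ℝ) : E := fderiv ℝ f x (0, 1)

lemma ipQ_eq_inner (x y : ℍ[ℝ]) : ipQ x y = ⟪x, y⟫ := rfl

lemma ipQ_comm (x y : ℍ[ℝ]) : ipQ x y = ipQ y x := (real_inner_comm y x)

lemma pdu_ipQ (f g : ℝ × ℝ → ℍ[ℝ]) (x : ℝ × ℝ) (hf : DifferentiableAt ℝ f x)
    (hg : DifferentiableAt ℝ g x) :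
    pdu (fun y => ipQ (f y) (g y)) x = ipQ (pdu f x) (g x) + ipQ (f x) (pdu g x) := by
  simp only [ipQ_eq_inner, pdu]
  rw [fderiv_inner_apply ℝ hf hg, add_comm]

lemma pdv_ipQ (f g : ℝ × ℝ → ℍ[ℝ]) (x : ℝ × ℝ) (hf : DifferentiableAt ℝ f x)
    (hg : DifferentiableAt ℝ g x) :
    pdv (fun y => ipQ (f y) (g y)) x = ipQ (pdv f x) (g x) + ipQ (f x) (pdv g x) := by
  simp only [ipQ_eq_inner, pdv]
  rw [fderiv_inner_apply ℝ hf hg, add_comm]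

lemma pdu_congr {E : Type*} [NormedAddCommGroup E] [NormedSpace ℝ E]
    {f g : ℝ × ℝ → E} {U : Set (ℝ × ℝ)} (hU : IsOpen U) {x : ℝ × ℝ} (hx : x ∈ U)
    (h : ∀ y ∈ U, f y = g y) : pdu f x = pdu g x := by
  have : f =ᶠ[nhds x] g := Filter.eventuallyEq_of_mem (hU.mem_nhds hx) h
  simp only [pdu, this.fderiv_eq]

lemma pdv_congr {E : Type*} [NormedAddCommGroup E] [NormedSpace ℝ E]
    {f g : ℝ × ℝ → E} {U : Set (ℝ × ℝ)} (hU : IsOpen U) {x : ℝ × ℝ} (hx : x ∈ U)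
    (h : ∀ y ∈ U, f y = g y) : pdv f x = pdv g x := by
  have : f =ᶠ[nhds x] g := Filter.eventuallyEq_of_mem (hU.mem_nhds hx) h
  simp only [pdv, this.fderiv_eq]

lemma contDiffOn_pdu {E : Type*} [NormedAddCommGroup E] [NormedSpace ℝ E]
    {f : ℝ × ℝ → E} {U : Set (ℝ × ℝ)} (hU : IsOpen U)
    (hf : ContDiffOn ℝ (⊤ : ℕ∞) f U) : ContDiffOn ℝ (⊤ : ℕ∞) (pdu f) U := by
  have h1 : ContDiffOn ℝ (⊤ : ℕ∞) (fderiv ℝ f) U := hf.fderiv_of_isOpen hU (by simp)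
  exact (ContinuousLinearMap.apply ℝ E ((1:ℝ), (0:ℝ))).contDiff.comp_contDiffOn h1

lemma contDiffOn_pdv {E : Type*} [NormedAddCommGroup E] [NormedSpace ℝ E]
    {f : ℝ × ℝ → E} {U : Set (ℝ × ℝ)} (hU : IsOpen U)
    (hf : ContDiffOn ℝ (⊤ : ℕ∞) f U) : ContDiffOn ℝ (⊤ : ℕ∞) (pdv f) U := by
  have h1 : ContDiffOn ℝ (⊤ : ℕ∞) (fderiv ℝ f) U := hf.fderiv_of_isOpen hU (by simp)
  exact (ContinuousLinearMap.apply ℝ E ((0:ℝ), (1:ℝ))).contDiff.comp_contDiffOn h1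

lemma diffAt_of_contDiffOn {E : Type*} [NormedAddCommGroup E] [NormedSpace ℝ E]
    {f : ℝ × ℝ → E} {U : Set (ℝ × ℝ)} (hU : IsOpen U) {x : ℝ × ℝ} (hx : x ∈ U)
    (hf : ContDiffOn ℝ (⊤ : ℕ∞) f U) : DifferentiableAt ℝ f x :=
  (hf.contDiffAt (hU.mem_nhds hx)).differentiableAt (by simp)

lemma fderiv_apply_dir {E : Type*} [NormedAddCommGroup E] [NormedSpace ℝ E]
    {f : ℝ × ℝ → E} {x : ℝ × ℝ} (hd : DifferentiableAt ℝ (fderiv ℝ f) x) (v w : ℝ × ℝ) :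
    fderiv ℝ (fun y => fderiv ℝ f y v) x w = fderiv ℝ (fderiv ℝ f) x w v := by
  have h := ((ContinuousLinearMap.apply ℝ E v).hasFDerivAt).comp x hd.hasFDerivAt
  have : (fun y => fderiv ℝ f y v) = (ContinuousLinearMap.apply ℝ E v) ∘ (fderiv ℝ f) := rfl
  rw [this, h.fderiv]
  rfl

lemma clairaut {E : Type*} [NormedAddCommGroup E] [NormedSpace ℝ E]
    {f : ℝ × ℝ → E} {U : Set (ℝ × ℝ)} (hU : IsOpen U) {x : ℝ × ℝ} (hx : x ∈ U)
    (hf : ContDiffOn ℝ (⊤ : ℕ∞) f U) : pdu (pdv f) x = pdv (pdu f) x := by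
  have hca : ContDiffAt ℝ (⊤ : ℕ∞) f x := hf.contDiffAt (hU.mem_nhds hx)
  have hsym : IsSymmSndFDerivAt ℝ f x := hca.isSymmSndFDerivAt (by rw [minSmoothness_of_isRCLikeNormedField]; exact WithTop.coe_le_coe.mpr (le_top : (2 : ℕ∞) ≤ ⊤))
  have hcd : ContDiffOn ℝ (⊤ : ℕ∞) (fderiv ℝ f) U := hf.fderiv_of_isOpen hU (by simp)
  have hd : DifferentiableAt ℝ (fderiv ℝ f) x := diffAt_of_contDiffOn hU hx hcd
  show fderiv ℝ (fun y => fderiv ℝ f y (0,1)) x (1,0) = fderiv ℝ (fun y => fderiv ℝ f y (1,0)) x (0,1)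
  rw [fderiv_apply_dir hd, fderiv_apply_dir hd]
  exact hsym.eq (1,0) (0,1)


section PD
variable {E : Type*} [NormedAddCommGroup E] [NormedSpace ℝ E]

lemma pdu_fun_add {f g : ℝ × ℝ → E} {x : ℝ × ℝ} (hf : DifferentiableAt ℝ f x)
    (hg : DifferentiableAt ℝ g x) :
    pdu (fun y => f y + g y) x = pdu f x + pdu g x := by
  simp [pdu, fderiv_fun_add hf hg]

lemma pdv_fun_add {f g : ℝ × ℝ → E} {x : ℝ × ℝ} (hf : DifferentiableAt ℝ f x)
    (hg : DifferentiableAt ℝ g x) :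
    pdv (fun y => f y + g y) x = pdv f x + pdv g x := by
  simp [pdv, fderiv_fun_add hf hg]

lemma pdu_fun_sub {f g : ℝ × ℝ → E} {x : ℝ × ℝ} (hf : DifferentiableAt ℝ f x)
    (hg : DifferentiableAt ℝ g x) :
    pdu (fun y => f y - g y) x = pdu f x - pdu g x := by
  simp [pdu, fderiv_fun_sub hf hg]

lemma pdv_fun_sub {f g : ℝ × ℝ → E} {x : ℝ × ℝ} (hf : DifferentiableAt ℝ f x)
    (hg : DifferentiableAt ℝ g x) :
    pdv (fun y => f y - g y) x = pdv f x - pdv g x := by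
  simp [pdv, fderiv_fun_sub hf hg]

lemma pdu_fun_neg (f : ℝ × ℝ → E) (x : ℝ × ℝ) :
    pdu (fun y => -(f y)) x = -pdu f x := by
  simp [pdu, fderiv_neg]

lemma pdv_fun_neg (f : ℝ × ℝ → E) (x : ℝ × ℝ) :
    pdv (fun y => -(f y)) x = -pdv f x := by
  simp [pdv, fderiv_neg]

lemma pdu_fun_smul {c : ℝ × ℝ → ℝ} {f : ℝ × ℝ → E} {x : ℝ × ℝ}
    (hc : DifferentiableAt ℝ c x) (hf : DifferentiableAt ℝ f x) :
    pdu (fun y => c y • f y) x = pdu c x • f x + c x • pdu f x := by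
  simp only [pdu, fderiv_fun_smul hc hf]
  simp [add_comm]

lemma pdv_fun_smul {c : ℝ × ℝ → ℝ} {f : ℝ × ℝ → E} {x : ℝ × ℝ}
    (hc : DifferentiableAt ℝ c x) (hf : DifferentiableAt ℝ f x) :
    pdv (fun y => c y • f y) x = pdv c x • f x + c x • pdv f x := by
  simp only [pdv, fderiv_fun_smul hc hf]
  simp [add_comm]

lemma pdu_const_mul {c : ℝ} {f : ℝ × ℝ → ℝ} {x : ℝ × ℝ} (hf : DifferentiableAt ℝ f x) :
    pdu (fun y => c * f y) x = c * pdu f x := by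
  simp [pdu, fderiv_const_mul hf]

lemma pdv_const_mul {c : ℝ} {f : ℝ × ℝ → ℝ} {x : ℝ × ℝ} (hf : DifferentiableAt ℝ f x) :
    pdv (fun y => c * f y) x = c * pdv f x := by
  simp [pdv, fderiv_const_mul hf]

lemma pdu_const (c : E) (x : ℝ × ℝ) : pdu (fun _ => c) x = 0 := by
  simp [pdu]

lemma pdv_const (c : E) (x : ℝ × ℝ) : pdv (fun _ => c) x = 0 := by
  simp [pdv]

lemma pdu_exp {ω : ℝ × ℝ → ℝ} {x : ℝ × ℝ} (hω : DifferentiableAt ℝ ω x) :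
    pdu (fun y => Real.exp (ω y)) x = Real.exp (ω x) * pdu ω x := by
  simp [pdu, fderiv_exp hω]

lemma pdv_exp {ω : ℝ × ℝ → ℝ} {x : ℝ × ℝ} (hω : DifferentiableAt ℝ ω x) :
    pdv (fun y => Real.exp (ω y)) x = Real.exp (ω x) * pdv ω x := by
  simp [pdv, fderiv_exp hω]

end PD

lemma re_mul_comm (a b : ℍ[ℝ]) : (a * b).re = (b * a).re := by
  simp [Quaternion.re_mul]; ring

lemma re_mul_rot (a b c : ℍ[ℝ]) : (a * b * c).re = (b * c * a).re := by
  simp [Quaternion.re_mul]; ring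

lemma ipQ_smul_left (r : ℝ) (x y : ℍ[ℝ]) : ipQ (r • x) y = r * ipQ x y := by
  simp [ipQ, smul_mul_assoc]

lemma ipQ_smul_right (r : ℝ) (x y : ℍ[ℝ]) : ipQ x (r • y) = r * ipQ x y := by
  simp [ipQ, mul_smul_comm]

lemma ipQ_add_left (x y z : ℍ[ℝ]) : ipQ (x + y) z = ipQ x z + ipQ y z := by
  simp [ipQ, add_mul]

lemma ipQ_sub_left (x y z : ℍ[ℝ]) : ipQ (x - y) z = ipQ x z - ipQ y z := by
  simp [ipQ, sub_mul]

lemma ipQ_neg_left (x y : ℍ[ℝ]) : ipQ (-x) y = -ipQ x y := by simp [ipQ]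

lemma ipQ_zero_left (y : ℍ[ℝ]) : ipQ 0 y = 0 := by simp [ipQ]

lemma imag_anticomm {a b : ℍ[ℝ]} (ha : a.re = 0) (hb : b.re = 0) (hab : ipQ a b = 0) :
    b * a = -(a * b) := by
  have hab' : a.imI * b.imI + a.imJ * b.imJ + a.imK * b.imK = 0 := by
    simpa [ipQ, Quaternion.re_mul, ha, hb] using hab
  ext <;> simp [Quaternion.re_mul, Quaternion.imI_mul, Quaternion.imJ_mul, Quaternion.imK_mul, ha, hb] <;> linarith

lemma re_mul_eq_neg_ipQ {a b : ℍ[ℝ]} (hb : b.re = 0) : (a * b).re = -ipQ a b := by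
  simp [ipQ, Quaternion.re_mul, hb]; ring

lemma quat_delta_zero {α β δ : ℍ[ℝ]} (hα : α.re = 0) (hβ : β.re = 0) (hδ : δ.re = 0)
    (hab : ipQ α β = 0) (hδa : ipQ δ α = 0) (hδb : ipQ δ β = 0) (hδab : ipQ δ (α * β) = 0)
    (hne : α * β ≠ 0) : δ = 0 := by
  have habre : (α * β).re = 0 := by rw [re_mul_eq_neg_ipQ hβ, hab, neg_zero]
  have h1 : α * δ = -(δ * α) := imag_anticomm hδ hα hδa
  have h2 : β * δ = -(δ * β) := imag_anticomm hδ hβ hδb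
  have h3 : (α * β) * δ = -(δ * (α * β)) := imag_anticomm hδ habre hδab
  have h4 : δ * (α * β) = (α * β) * δ := by
    rw [← mul_assoc, ← neg_eq_iff_eq_neg.mpr h1, neg_mul, mul_assoc, ← neg_eq_iff_eq_neg.mpr h2,
      mul_neg, neg_neg, mul_assoc]
  have h5 : δ * (α * β) = 0 := by
    have h6 : δ * (α * β) + δ * (α * β) = 0 := by
      nth_rewrite 2 [h4]
      rw [h3, add_neg_cancel]
    have h7 : (2 : ℝ) • (δ * (α * β)) = 0 := by rw [two_smul]; exact h6
    exact (smul_eq_zero.mp h7).resolve_left (by norm_num)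
  rw [h4] at h5
  rcases mul_eq_zero.mp h5 with h | h
  · exact absurd h hne
  · exact h

lemma ipQ_self_eq_normSq (a : ℍ[ℝ]) : ipQ a a = normSq a := rfl

lemma ipQ_self_norm (a : ℍ[ℝ]) : ipQ a a = ‖a‖ ^ 2 := by
  rw [ipQ_self_eq_normSq, Quaternion.normSq_eq_norm_mul_self, sq]

lemma ipQ_mul_shift (p w y : ℍ[ℝ]) : ipQ w (p * y) = ipQ (star p * w) y := by
  simp only [ipQ, star_mul, ← mul_assoc]
  rw [re_mul_comm (w * star y) (star p), ← mul_assoc]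

lemma ipQ_mul_mul (p x y : ℍ[ℝ]) (hps : star p * p = 1) : ipQ (p * x) (p * y) = ipQ x y := by
  rw [ipQ_mul_shift, ← mul_assoc, hps, one_mul]

lemma ipQ_coe_left (r : ℝ) (q : ℍ[ℝ]) : ipQ ((r : ℍ[ℝ])) q = r * q.re := by
  simp [ipQ, Quaternion.coe_mul_eq_smul]

lemma ipQ_one_left (q : ℍ[ℝ]) : ipQ 1 q = q.re := by simp [ipQ]

lemma ipQ_aab (α β : ℍ[ℝ]) (hβ : β.re = 0) : ipQ α (α * β) = 0 := by
  simp only [ipQ, star_mul, ← mul_assoc]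
  rw [re_mul_rot α (star β) (star α), mul_assoc, Quaternion.star_mul_self]
  simp [Quaternion.mul_coe_eq_smul, hβ]

lemma ipQ_bab (α β : ℍ[ℝ]) (hα : α.re = 0) : ipQ β (α * β) = 0 := by
  simp only [ipQ, star_mul, ← mul_assoc]
  rw [Quaternion.self_mul_star]
  simp [Quaternion.coe_mul_eq_smul, hα]

lemma quat_expand (p α β : ℍ[ℝ]) (hp : ‖p‖ = 1) (hα : α.re = 0) (hβ : β.re = 0)
    (hab : ipQ α β = 0) (hne : α * β ≠ 0) (w : ℍ[ℝ]) :
    w = ipQ w p • p + (ipQ α α)⁻¹ • (ipQ w (p * α) • (p * α))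
      + (ipQ β β)⁻¹ • (ipQ w (p * β) • (p * β))
      + (ipQ (α * β) (α * β))⁻¹ • (ipQ w (p * (α * β)) • (p * (α * β))) := by
  have hα0 : α ≠ 0 := fun h => hne (by rw [h, zero_mul])
  have hβ0 : β ≠ 0 := fun h => hne (by rw [h, mul_zero])
  have hnsp : normSq p = 1 := by
    rw [Quaternion.normSq_eq_norm_mul_self, hp, one_mul]
  have hps : star p * p = 1 := by rw [Quaternion.star_mul_self, hnsp]; norm_num
  have hsp : p * star p = 1 := by rw [Quaternion.self_mul_star, hnsp]; norm_num
  set c := star p * w with hc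
  have hwc : w = p * c := by rw [hc, ← mul_assoc, hsp, one_mul]
  have habre : (α * β).re = 0 := by rw [re_mul_eq_neg_ipQ hβ, hab, neg_zero]
  set s1 : ℝ := (ipQ α α)⁻¹ * ipQ c α with hs1
  set s2 : ℝ := (ipQ β β)⁻¹ * ipQ c β with hs2
  set s3 : ℝ := (ipQ (α * β) (α * β))⁻¹ * ipQ c (α * β) with hs3
  set δ : ℍ[ℝ] := (c - (c.re : ℍ[ℝ])) - s1 • α - s2 • β - s3 • (α * β) with hδdef
  have haa : ipQ α α ≠ 0 := by
    rw [ipQ_self_eq_normSq]; exact fun h => hα0 (Quaternion.normSq_eq_zero.mp h)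
  have hbb : ipQ β β ≠ 0 := by
    rw [ipQ_self_eq_normSq]; exact fun h => hβ0 (Quaternion.normSq_eq_zero.mp h)
  have habab : ipQ (α * β) (α * β) ≠ 0 := by
    rw [ipQ_self_eq_normSq]; exact fun h => hne (Quaternion.normSq_eq_zero.mp h)
  have him : ∀ q : ℍ[ℝ], q.re = 0 → ipQ (c - (c.re : ℍ[ℝ])) q = ipQ c q := by
    intro q hq
    rw [ipQ_sub_left, ipQ_coe_left, hq, mul_zero, sub_zero]
  have hδre : δ.re = 0 := by
    simp [hδdef, Quaternion.re_sub, Quaternion.re_smul, hα, hβ, habre, smul_eq_mul]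
  have hexp : ∀ q : ℍ[ℝ], ipQ δ q =
      ipQ c q - c.re * q.re - s1 * ipQ α q - s2 * ipQ β q - s3 * ipQ (α * β) q := by
    intro q
    simp only [hδdef, ipQ_sub_left, ipQ_smul_left, ipQ_coe_left]
  have hδa : ipQ δ α = 0 := by
    rw [hexp α, hα, hs1, ipQ_comm β α, ipQ_comm (α*β) α, hab, ipQ_aab α β hβ]
    field_simp
    ring
  have hδb : ipQ δ β = 0 := by
    rw [hexp β, hβ, hs2, hab, ipQ_comm (α*β) β, ipQ_bab α β hα]
    field_simp
    ring
  have hδab : ipQ δ (α * β) = 0 := by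
    rw [hexp (α*β), habre, hs3, ipQ_aab α β hβ, ipQ_bab α β hα]
    field_simp
    ring
  have hδ0 : δ = 0 := quat_delta_zero hα hβ hδre hab hδa hδb hδab hne
  have hcsum : c = (c.re : ℍ[ℝ]) + s1 • α + s2 • β + s3 • (α * β) := by
    have h : c - (c.re : ℍ[ℝ]) - s1 • α - s2 • β - s3 • (α * β) = 0 := by
      rw [← hδdef]; exact hδ0
    rw [← sub_eq_zero]
    rw [show c - ((c.re : ℍ[ℝ]) + s1 • α + s2 • β + s3 • (α * β))
        = c - (c.re : ℍ[ℝ]) - s1 • α - s2 • β - s3 • (α * β) by abel]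
    exact h
  have hre : c.re = ipQ w p := by
    rw [ipQ, hc, re_mul_comm]
  have hca : ipQ c α = ipQ w (p * α) := (ipQ_mul_shift p w α).symm
  have hcb : ipQ c β = ipQ w (p * β) := (ipQ_mul_shift p w β).symm
  have hcab : ipQ c (α * β) = ipQ w (p * (α * β)) := (ipQ_mul_shift p w (α * β)).symm
  calc w = p * c := hwc
    _ = p * ((c.re : ℍ[ℝ]) + s1 • α + s2 • β + s3 • (α * β)) := by rw [← hcsum]
    _ = c.re • p + s1 • (p * α) + s2 • (p * β) + s3 • (p * (α * β)) := by
        simp only [mul_add, mul_smul_comm, Quaternion.mul_coe_eq_smul]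
    _ = _ := by
        rw [hre, hs1, hs2, hs3, hca, hcb, hcab]
        simp only [smul_smul]

lemma quat_parseval (p α β : ℍ[ℝ]) (hp : ‖p‖ = 1) (hα : α.re = 0) (hβ : β.re = 0)
    (hab : ipQ α β = 0) (hne : α * β ≠ 0) (w z : ℍ[ℝ]) :
    ipQ w z = ipQ w p * ipQ z p + (ipQ α α)⁻¹ * (ipQ w (p * α) * ipQ z (p * α))
      + (ipQ β β)⁻¹ * (ipQ w (p * β) * ipQ z (p * β))
      + (ipQ (α * β) (α * β))⁻¹ * (ipQ w (p * (α * β)) * ipQ z (p * (α * β))) := by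
  conv_lhs => rw [quat_expand p α β hp hα hβ hab hne w]
  simp only [ipQ_add_left, ipQ_smul_left]
  rw [ipQ_comm p z, ipQ_comm (p*α) z, ipQ_comm (p*β) z, ipQ_comm (p*(α*β)) z]

lemma crossQ_eq_mul {α β : ℍ[ℝ]} (hα : α.re = 0) (hβ : β.re = 0) (hab : ipQ α β = 0) :
    crossQ α β = α * β := by
  rw [crossQ, imag_anticomm hα hβ hab, sub_neg_eq_add, ← two_smul ℝ, smul_smul]
  norm_num

lemma quat_Nfacts (p a b n : ℍ[ℝ]) (E : ℝ) (hEpos : 0 < E) (hp : ‖p‖ = 1)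
    (hap : ipQ a p = 0) (hbp : ipQ b p = 0) (hab : ipQ a b = 0)
    (haa : ipQ a a = E) (hbb : ipQ b b = E)
    (hn : n = p * (E⁻¹ • crossQ (p⁻¹ * a) (p⁻¹ * b))) :
    ipQ n n = 1 ∧ ipQ n p = 0 ∧ ipQ n a = 0 ∧ ipQ n b = 0 ∧
    ∀ w z : ℍ[ℝ], ipQ w z = ipQ w p * ipQ z p + E⁻¹ * (ipQ w a * ipQ z a)
      + E⁻¹ * (ipQ w b * ipQ z b) + ipQ w n * ipQ z n := by
  have hnsp : normSq p = 1 := by rw [Quaternion.normSq_eq_norm_mul_self, hp, one_mul]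
  have hps : star p * p = 1 := by rw [Quaternion.star_mul_self, hnsp]; norm_num
  have hsp : p * star p = 1 := by rw [Quaternion.self_mul_star, hnsp]; norm_num
  have hp0 : p ≠ 0 := by
    intro h; rw [h] at hp; simp at hp
  have hpinv : p⁻¹ = star p := by
    rw [Quaternion.inv_def, hnsp]; simp
  set α := star p * a with hαdef
  set β := star p * b with hβdef
  have hpa : p * α = a := by rw [hαdef, ← mul_assoc, hsp, one_mul]
  have hpb : p * β = b := by rw [hβdef, ← mul_assoc, hsp, one_mul]
  have hαre : α.re = 0 := by
    have : (star p * a).re = (a * star p).re := re_mul_comm _ _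
    rw [hαdef, this]; exact hap
  have hβre : β.re = 0 := by
    have : (star p * b).re = (b * star p).re := re_mul_comm _ _
    rw [hβdef, this]; exact hbp
  have hαβ : ipQ α β = 0 := by
    have := ipQ_mul_mul (star p) a b (by rw [star_star]; exact hsp)
    rw [← hαdef, ← hβdef] at this; rw [this]; exact hab
  have hαα : ipQ α α = E := by
    have := ipQ_mul_mul (star p) a a (by rw [star_star]; exact hsp)
    rw [← hαdef] at this; rw [this]; exact haa
  have hββ : ipQ β β = E := by
    have := ipQ_mul_mul (star p) b b (by rw [star_star]; exact hsp)
    rw [← hβdef] at this; rw [this]; exact hbb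
  have habab : ipQ (α * β) (α * β) = E * E := by
    rw [ipQ_self_eq_normSq, Quaternion.normSq.map_mul, ← ipQ_self_eq_normSq,
      ← ipQ_self_eq_normSq, hαα, hββ]
  have hne : α * β ≠ 0 := by
    intro h
    rw [h, ipQ_zero_left] at habab
    exact absurd habab.symm (by positivity)
  have hnval : n = E⁻¹ • (p * (α * β)) := by
    rw [hn, hpinv, ← hαdef, ← hβdef, crossQ_eq_mul hαre hβre hαβ, mul_smul_comm]
  have hwn : ∀ w : ℍ[ℝ], ipQ w n = E⁻¹ * ipQ w (p * (α * β)) := by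
    intro w; rw [hnval, ipQ_smul_right]
  have hnn : ipQ n n = 1 := by
    rw [hwn n, hnval, ipQ_smul_left, ipQ_mul_mul p _ _ hps, habab]
    field_simp
  have hnp : ipQ n p = 0 := by
    have h := hwn p
    rw [ipQ_mul_shift p p (α * β), hps, ipQ_one_left, re_mul_eq_neg_ipQ hβre, hαβ] at h
    rw [ipQ_comm, h]
    ring
  have hna : ipQ n a = 0 := by
    rw [ipQ_comm, hwn, ← hpa, ipQ_mul_mul p _ _ hps, ipQ_aab α β hβre, mul_zero]
  have hnb : ipQ n b = 0 := by
    rw [ipQ_comm, hwn, ← hpb, ipQ_mul_mul p _ _ hps, ipQ_bab α β hαre, mul_zero]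
  refine ⟨hnn, hnp, hna, hnb, fun w z => ?_⟩
  have hpars := quat_parseval p α β hp hαre hβre hαβ hne w z
  rw [hpa, hpb] at hpars
  rw [hpars, hαα, hββ, habab, hwn w, hwn z]
  field_simp



lemma diff_ipQ_eq_u {U : Set (ℝ × ℝ)} (hU : IsOpen U) {x : ℝ × ℝ} (hx : x ∈ U)
    {f g : ℝ × ℝ → ℍ[ℝ]} {c : ℝ × ℝ → ℝ}
    (hf : DifferentiableAt ℝ f x) (hg : DifferentiableAt ℝ g x)
    (h : ∀ y ∈ U, ipQ (f y) (g y) = c y) :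
    ipQ (pdu f x) (g x) + ipQ (f x) (pdu g x) = pdu c x := by
  rw [← pdu_ipQ f g x hf hg]; exact pdu_congr hU hx h

lemma diff_ipQ_eq_v {U : Set (ℝ × ℝ)} (hU : IsOpen U) {x : ℝ × ℝ} (hx : x ∈ U)
    {f g : ℝ × ℝ → ℍ[ℝ]} {c : ℝ × ℝ → ℝ}
    (hf : DifferentiableAt ℝ f x) (hg : DifferentiableAt ℝ g x)
    (h : ∀ y ∈ U, ipQ (f y) (g y) = c y) :
    ipQ (pdv f x) (g x) + ipQ (f x) (pdv g x) = pdv c x := by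
  rw [← pdv_ipQ f g x hf hg]; exact pdv_congr hU hx h

/-- the Hopf differential coefficient `σ(∂z,∂z) = φ + iψ` of a minimal
surface in `S³` is holomorphic: `φ` and `ψ` satisfy the Cauchy–Riemann equations. -/
theorem stmt12 (U : Set (ℝ × ℝ)) (hU : IsOpen U)
    (ω : ℝ × ℝ → ℝ) (hω : ContDiffOn ℝ (⊤ : ℕ∞) ω U)
    (p : ℝ × ℝ → ℍ[ℝ]) (hp : ContDiffOn ℝ (⊤ : ℕ∞) p U)
    (hunit : ∀ x ∈ U, ‖p x‖ = 1)
    (hE : ∀ x ∈ U, ipQ (pdu p x) (pdu p x) = 2 * Real.exp (ω x))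
    (hG : ∀ x ∈ U, ipQ (pdv p x) (pdv p x) = 2 * Real.exp (ω x))
    (hF : ∀ x ∈ U, ipQ (pdu p x) (pdv p x) = 0)
    (hmin : ∀ x ∈ U, pdu (pdu p) x + pdv (pdv p) x = -((4 * Real.exp (ω x)) • p x))
    (N : ℝ × ℝ → ℍ[ℝ])
    (hN : ∀ x ∈ U, N x =
      p x * ((2 * Real.exp (ω x))⁻¹ • crossQ ((p x)⁻¹ * pdu p x) ((p x)⁻¹ * pdv p x)))
    (φ ψ : ℝ × ℝ → ℝ)
    (hφ : φ = fun x => (1 / 4) * ipQ (pdu (pdu p) x - pdv (pdv p) x) (N x))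
    (hψ : ψ = fun x => -((1 / 2) * ipQ (pdv (pdu p) x) (N x))) :
    ∀ x ∈ U, pdu φ x = pdv ψ x ∧ pdv φ x = -pdu ψ x := by
  -- smoothness of all derivatives
  have hA : ContDiffOn ℝ (⊤ : ℕ∞) (pdu p) U := contDiffOn_pdu hU hp
  have hB : ContDiffOn ℝ (⊤ : ℕ∞) (pdv p) U := contDiffOn_pdv hU hp
  have hAu : ContDiffOn ℝ (⊤ : ℕ∞) (pdu (pdu p)) U := contDiffOn_pdu hU hA
  have hAv : ContDiffOn ℝ (⊤ : ℕ∞) (pdv (pdu p)) U := contDiffOn_pdv hU hA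
  have hBv : ContDiffOn ℝ (⊤ : ℕ∞) (pdv (pdv p)) U := contDiffOn_pdv hU hB
  have hBu : ContDiffOn ℝ (⊤ : ℕ∞) (pdu (pdv p)) U := contDiffOn_pdu hU hB
  -- smoothness of N
  have hp0 : ∀ y ∈ U, p y ≠ 0 := by
    intro y hy h0
    have := hunit y hy
    rw [h0] at this; simp at this
  have hNs : ContDiffOn ℝ (⊤ : ℕ∞) N U := by
    have hinv : ContDiffOn ℝ (⊤ : ℕ∞) (fun y => (p y)⁻¹) U := by
      intro y hy
      have h1 : ContDiffAt ℝ (⊤ : ℕ∞) Ring.inverse (p y) :=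
        contDiffAt_ringInverse ℝ (Units.mk0 (p y) (hp0 y hy))
      have h2 : ContDiffAt ℝ (⊤ : ℕ∞) (fun z => Ring.inverse (p z)) y :=
        h1.comp y (hp.contDiffAt (hU.mem_nhds hy))
      have h3 : (fun z : ℝ × ℝ => Ring.inverse (p z)) = fun z => (p z)⁻¹ := by
        funext z; exact Ring.inverse_eq_inv (p z)
      rw [h3] at h2
      exact h2.contDiffWithinAt
    have hform : ContDiffOn ℝ (⊤ : ℕ∞) (fun y => p y *
        ((2 * Real.exp (ω y))⁻¹ • crossQ ((p y)⁻¹ * pdu p y) ((p y)⁻¹ * pdv p y))) U := by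
      apply hp.mul
      apply ContDiffOn.fun_smul
      · apply ContDiffOn.inv
        · exact contDiffOn_const.mul (Real.contDiff_exp.comp_contDiffOn hω)
        · intro y hy; positivity
      · simp only [crossQ]
        apply ContDiffOn.const_smul
        exact ((hinv.mul hA).mul (hinv.mul hB)).sub ((hinv.mul hB).mul (hinv.mul hA))
    exact hform.congr hN
  -- differentiability abbreviations
  have dp : ∀ y ∈ U, DifferentiableAt ℝ p y := fun y hy => diffAt_of_contDiffOn hU hy hp
  have dω : ∀ y ∈ U, DifferentiableAt ℝ ω y := fun y hy => diffAt_of_contDiffOn hU hy hω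
  have dA : ∀ y ∈ U, DifferentiableAt ℝ (pdu p) y := fun y hy => diffAt_of_contDiffOn hU hy hA
  have dB : ∀ y ∈ U, DifferentiableAt ℝ (pdv p) y := fun y hy => diffAt_of_contDiffOn hU hy hB
  have dAu : ∀ y ∈ U, DifferentiableAt ℝ (pdu (pdu p)) y := fun y hy => diffAt_of_contDiffOn hU hy hAu
  have dAv : ∀ y ∈ U, DifferentiableAt ℝ (pdv (pdu p)) y := fun y hy => diffAt_of_contDiffOn hU hy hAv
  have dBv : ∀ y ∈ U, DifferentiableAt ℝ (pdv (pdv p)) y := fun y hy => diffAt_of_contDiffOn hU hy hBv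
  have dN : ∀ y ∈ U, DifferentiableAt ℝ N y := fun y hy => diffAt_of_contDiffOn hU hy hNs
  -- basic pointwise identities
  have e1 : ∀ y ∈ U, ipQ (p y) (p y) = 1 := by
    intro y hy
    rw [ipQ_self_norm, hunit y hy]; norm_num
  have e2 : ∀ y ∈ U, ipQ (pdu p y) (p y) = 0 := by
    intro y hy
    have h1 := diff_ipQ_eq_u hU hy (dp y hy) (dp y hy) (c := fun _ => (1:ℝ)) e1
    rw [pdu_const, ipQ_comm (p y) (pdu p y)] at h1
    linarith
  have e3 : ∀ y ∈ U, ipQ (pdv p y) (p y) = 0 := by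
    intro y hy
    have h1 := diff_ipQ_eq_v hU hy (dp y hy) (dp y hy) (c := fun _ => (1:ℝ)) e1
    rw [pdv_const, ipQ_comm (p y) (pdv p y)] at h1
    linarith
  -- N facts at every point
  have NFall := fun (y : ℝ × ℝ) (hy : y ∈ U) =>
    quat_Nfacts (p y) (pdu p y) (pdv p y) (N y) (2 * Real.exp (ω y)) (by positivity)
      (hunit y hy) (e2 y hy) (e3 y hy) (hF y hy) (hE y hy) (hG y hy) (hN y hy)
  have nf1 : ∀ y ∈ U, ipQ (N y) (N y) = 1 := fun y hy => (NFall y hy).1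
  have nf2 : ∀ y ∈ U, ipQ (N y) (p y) = 0 := fun y hy => (NFall y hy).2.1
  have nf3 : ∀ y ∈ U, ipQ (N y) (pdu p y) = 0 := fun y hy => (NFall y hy).2.2.1
  have nf4 : ∀ y ∈ U, ipQ (N y) (pdv p y) = 0 := fun y hy => (NFall y hy).2.2.2.1
  intro x hx
  have PARS := (NFall x hx).2.2.2.2
  have dexp : DifferentiableAt ℝ (fun z => Real.exp (ω z)) x := (dω x hx).exp
  -- Clairaut facts
  have C1 : ∀ y ∈ U, pdu (pdv p) y = pdv (pdu p) y := fun y hy => clairaut hU hy hp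
  have C2 : pdu (pdv (pdu p)) x = pdv (pdu (pdu p)) x := clairaut hU hx hA
  have C3 : pdu (pdv (pdv p)) x = pdv (pdv (pdu p)) x := by
    rw [clairaut hU hx hB]
    exact pdv_congr hU hx C1
  -- first fundamental form derivatives
  have P1 : ipQ (pdu (pdu p) x) (pdu p x) = Real.exp (ω x) * pdu ω x := by
    have h1 := diff_ipQ_eq_u hU hx (dA x hx) (dA x hx) hE
    rw [pdu_const_mul dexp, pdu_exp (dω x hx), ipQ_comm (pdu p x) (pdu (pdu p) x)] at h1
    linarith
  have P2 : ipQ (pdv (pdu p) x) (pdu p x) = Real.exp (ω x) * pdv ω x := by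
    have h1 := diff_ipQ_eq_v hU hx (dA x hx) (dA x hx) hE
    rw [pdv_const_mul dexp, pdv_exp (dω x hx), ipQ_comm (pdu p x) (pdv (pdu p) x)] at h1
    linarith
  have P3 : ipQ (pdv (pdu p) x) (pdv p x) = Real.exp (ω x) * pdu ω x := by
    have h1 := diff_ipQ_eq_u hU hx (dB x hx) (dB x hx) hG
    rw [pdu_const_mul dexp, pdu_exp (dω x hx), ipQ_comm (pdv p x) (pdu (pdv p) x)] at h1
    rw [C1 x hx] at h1
    linarith
  have P4 : ipQ (pdv (pdv p) x) (pdv p x) = Real.exp (ω x) * pdv ω x := by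
    have h1 := diff_ipQ_eq_v hU hx (dB x hx) (dB x hx) hG
    rw [pdv_const_mul dexp, pdv_exp (dω x hx), ipQ_comm (pdv p x) (pdv (pdv p) x)] at h1
    linarith
  have P5 : ipQ (pdu (pdu p) x) (pdv p x) = -(Real.exp (ω x) * pdv ω x) := by
    have h1 := diff_ipQ_eq_u hU hx (dA x hx) (dB x hx) (c := fun _ => (0:ℝ)) hF
    rw [pdu_const] at h1
    have h2 : ipQ (pdu p x) (pdu (pdv p) x) = Real.exp (ω x) * pdv ω x := by
      rw [ipQ_comm, C1 x hx]; exact P2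
    rw [h2] at h1
    linarith
  have P6 : ipQ (pdv (pdv p) x) (pdu p x) = -(Real.exp (ω x) * pdu ω x) := by
    have h1 := diff_ipQ_eq_v hU hx (dA x hx) (dB x hx) (c := fun _ => (0:ℝ)) hF
    rw [pdv_const] at h1
    have h2 : ipQ (pdu p x) (pdv (pdv p) x) = ipQ (pdv (pdv p) x) (pdu p x) := ipQ_comm _ _
    have h3 : ipQ (pdv (pdu p) x) (pdv p x) = Real.exp (ω x) * pdu ω x := P3
    rw [h2, h3] at h1
    linarith
  -- normal derivatives
  have Q1 : ipQ (pdu N x) (p x) = 0 := by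
    have h1 := diff_ipQ_eq_u hU hx (dN x hx) (dp x hx) (c := fun _ => (0:ℝ)) nf2
    rw [pdu_const, nf3 x hx] at h1
    linarith
  have Q2 : ipQ (pdv N x) (p x) = 0 := by
    have h1 := diff_ipQ_eq_v hU hx (dN x hx) (dp x hx) (c := fun _ => (0:ℝ)) nf2
    rw [pdv_const, nf4 x hx] at h1
    linarith
  have Q3 : ipQ (pdu N x) (N x) = 0 := by
    have h1 := diff_ipQ_eq_u hU hx (dN x hx) (dN x hx) (c := fun _ => (1:ℝ)) nf1
    rw [pdu_const, ipQ_comm (N x) (pdu N x)] at h1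
    linarith
  have Q4 : ipQ (pdv N x) (N x) = 0 := by
    have h1 := diff_ipQ_eq_v hU hx (dN x hx) (dN x hx) (c := fun _ => (1:ℝ)) nf1
    rw [pdv_const, ipQ_comm (N x) (pdv N x)] at h1
    linarith
  have Q5 : ipQ (pdu N x) (pdu p x) = -(ipQ (pdu (pdu p) x) (N x)) := by
    have h1 := diff_ipQ_eq_u hU hx (dN x hx) (dA x hx) (c := fun _ => (0:ℝ)) nf3
    rw [pdu_const, ipQ_comm (N x) (pdu (pdu p) x)] at h1
    linarith
  have Q6 : ipQ (pdv N x) (pdu p x) = -(ipQ (pdv (pdu p) x) (N x)) := by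
    have h1 := diff_ipQ_eq_v hU hx (dN x hx) (dA x hx) (c := fun _ => (0:ℝ)) nf3
    rw [pdv_const, ipQ_comm (N x) (pdv (pdu p) x)] at h1
    linarith
  have Q7 : ipQ (pdu N x) (pdv p x) = -(ipQ (pdv (pdu p) x) (N x)) := by
    have h1 := diff_ipQ_eq_u hU hx (dN x hx) (dB x hx) (c := fun _ => (0:ℝ)) nf4
    rw [pdu_const, ipQ_comm (N x) (pdu (pdv p) x), C1 x hx] at h1
    rw [ipQ_comm (pdv (pdu p) x) (N x)] at h1
    rw [ipQ_comm (pdv (pdu p) x) (N x)]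
    linarith
  have Q8 : ipQ (pdv N x) (pdv p x) = -(ipQ (pdv (pdv p) x) (N x)) := by
    have h1 := diff_ipQ_eq_v hU hx (dN x hx) (dB x hx) (c := fun _ => (0:ℝ)) nf4
    rw [pdv_const, ipQ_comm (N x) (pdv (pdv p) x)] at h1
    linarith
  -- minimality consequences
  have M0 : ipQ (pdu (pdu p) x) (N x) + ipQ (pdv (pdv p) x) (N x) = 0 := by
    have h1 : ipQ (pdu (pdu p) x + pdv (pdv p) x) (N x) = 0 := by
      rw [hmin x hx, ipQ_neg_left, ipQ_smul_left, ipQ_comm (p x) (N x), nf2 x hx]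
      ring
    rw [ipQ_add_left] at h1
    exact h1
  have hminD : ∀ (pd : (ℝ × ℝ → ℍ[ℝ]) → ℝ × ℝ → ℍ[ℝ]),
      True := fun _ => trivial
  have M1 : ipQ (pdu (pdu (pdu p)) x) (N x) + ipQ (pdu (pdv (pdv p)) x) (N x) = 0 := by
    have h1 : pdu (fun y => pdu (pdu p) y + pdv (pdv p) y) x
        = pdu (fun y => -((4 * Real.exp (ω y)) • p y)) x := pdu_congr hU hx hmin
    rw [pdu_fun_add (dAu x hx) (dBv x hx)] at h1
    have h2 : pdu (fun y => -((4 * Real.exp (ω y)) • p y)) x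
        = -(pdu (fun y => 4 * Real.exp (ω y)) x • p x + (4 * Real.exp (ω x)) • pdu p x) := by
      rw [pdu_fun_neg (fun y => (4 * Real.exp (ω y)) • p y) x]
      rw [pdu_fun_smul (dexp.const_mul 4) (dp x hx)]
    rw [h2, pdu_const_mul dexp, pdu_exp (dω x hx)] at h1
    have h3 := congrArg (fun q => ipQ q (N x)) h1
    simp only [ipQ_add_left, ipQ_neg_left, ipQ_smul_left] at h3
    rw [ipQ_comm (p x) (N x), nf2 x hx, ipQ_comm (pdu p x) (N x), nf3 x hx] at h3
    rw [h3]; ring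
  have M2 : ipQ (pdv (pdu (pdu p)) x) (N x) + ipQ (pdv (pdv (pdv p)) x) (N x) = 0 := by
    have h1 : pdv (fun y => pdu (pdu p) y + pdv (pdv p) y) x
        = pdv (fun y => -((4 * Real.exp (ω y)) • p y)) x := pdv_congr hU hx hmin
    rw [pdv_fun_add (dAu x hx) (dBv x hx)] at h1
    have h2 : pdv (fun y => -((4 * Real.exp (ω y)) • p y)) x
        = -(pdv (fun y => 4 * Real.exp (ω y)) x • p x + (4 * Real.exp (ω x)) • pdv p x) := by
      rw [pdv_fun_neg (fun y => (4 * Real.exp (ω y)) • p y) x]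
      rw [pdv_fun_smul (dexp.const_mul 4) (dp x hx)]
    rw [h2, pdv_const_mul dexp, pdv_exp (dω x hx)] at h1
    have h3 := congrArg (fun q => ipQ q (N x)) h1
    simp only [ipQ_add_left, ipQ_neg_left, ipQ_smul_left] at h3
    rw [ipQ_comm (p x) (N x), nf2 x hx, ipQ_comm (pdv p x) (N x), nf4 x hx] at h3
    rw [h3]; ring
  -- key Codazzi-type identities
  have key1 : ipQ (pdu (pdu p) x - pdv (pdv p) x) (pdu N x)
      + 2 * ipQ (pdv (pdu p) x) (pdv N x) = 0 := by
    rw [PARS (pdu (pdu p) x - pdv (pdv p) x) (pdu N x),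
      PARS (pdv (pdu p) x) (pdv N x)]
    rw [Q1, Q3, Q2, Q4, Q5, Q6, Q7, Q8]
    simp only [ipQ_sub_left]
    rw [P1, P2, P3, P4, P5, P6]
    have hr : Real.exp (ω x) ≠ 0 := Real.exp_ne_zero _
    have h22 : ipQ (pdv (pdv p) x) (N x) = -(ipQ (pdu (pdu p) x) (N x)) := by linarith
    rw [h22]
    field_simp
    ring
  have key2 : ipQ (pdu (pdu p) x - pdv (pdv p) x) (pdv N x)
      - 2 * ipQ (pdv (pdu p) x) (pdu N x) = 0 := by
    rw [PARS (pdu (pdu p) x - pdv (pdv p) x) (pdv N x),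
      PARS (pdv (pdu p) x) (pdu N x)]
    rw [Q1, Q3, Q2, Q4, Q5, Q6, Q7, Q8]
    simp only [ipQ_sub_left]
    rw [P1, P2, P3, P4, P5, P6]
    have hr : Real.exp (ω x) ≠ 0 := Real.exp_ne_zero _
    have h22 : ipQ (pdv (pdv p) x) (N x) = -(ipQ (pdu (pdu p) x) (N x)) := by linarith
    rw [h22]
    field_simp
    ring
  -- expand the derivatives of φ and ψ
  have dX : DifferentiableAt ℝ (fun y => pdu (pdu p) y - pdv (pdv p) y) x :=
    (dAu x hx).sub (dBv x hx)
  have dipX : DifferentiableAt ℝ (fun y => ipQ (pdu (pdu p) y - pdv (pdv p) y) (N y)) x :=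
    DifferentiableAt.inner ℝ dX (dN x hx)
  have dipAv : DifferentiableAt ℝ (fun y => ipQ (pdv (pdu p) y) (N y)) x :=
    DifferentiableAt.inner ℝ (dAv x hx) (dN x hx)
  have hφu : pdu φ x = (1/4) * ((ipQ (pdu (pdu (pdu p)) x) (N x)
      - ipQ (pdu (pdv (pdv p)) x) (N x)) + ipQ (pdu (pdu p) x - pdv (pdv p) x) (pdu N x)) := by
    rw [hφ, pdu_const_mul dipX, pdu_ipQ _ _ x dX (dN x hx),
      pdu_fun_sub (dAu x hx) (dBv x hx), ipQ_sub_left]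
  have hφv : pdv φ x = (1/4) * ((ipQ (pdv (pdu (pdu p)) x) (N x)
      - ipQ (pdv (pdv (pdv p)) x) (N x)) + ipQ (pdu (pdu p) x - pdv (pdv p) x) (pdv N x)) := by
    rw [hφ, pdv_const_mul dipX, pdv_ipQ _ _ x dX (dN x hx),
      pdv_fun_sub (dAu x hx) (dBv x hx), ipQ_sub_left]
  have hψu : pdu ψ x = -((1/2) * (ipQ (pdu (pdv (pdu p)) x) (N x)
      + ipQ (pdv (pdu p) x) (pdu N x))) := by
    rw [hψ]
    rw [pdu_fun_neg (fun y => (1/2 : ℝ) * ipQ (pdv (pdu p) y) (N y)) x]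
    rw [pdu_const_mul dipAv, pdu_ipQ _ _ x (dAv x hx) (dN x hx)]
  have hψv : pdv ψ x = -((1/2) * (ipQ (pdv (pdv (pdu p)) x) (N x)
      + ipQ (pdv (pdu p) x) (pdv N x))) := by
    rw [hψ]
    rw [pdv_fun_neg (fun y => (1/2 : ℝ) * ipQ (pdv (pdu p) y) (N y)) x]
    rw [pdv_const_mul dipAv, pdv_ipQ _ _ x (dAv x hx) (dN x hx)]
  constructor
  · -- ∂u φ = ∂v ψ
    rw [hφu, hψv]
    have hC : ipQ (pdu (pdv (pdv p)) x) (N x) = ipQ (pdv (pdv (pdu p)) x) (N x) := by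
      rw [C3]
    rw [hC]
    have hM1' : ipQ (pdu (pdu (pdu p)) x) (N x) = -(ipQ (pdv (pdv (pdu p)) x) (N x)) := by
      have := M1
      rw [C3] at this
      linarith
    rw [hM1']
    linarith [key1]
  · -- ∂v φ = -∂u ψ
    rw [hφv, hψu]
    have hC : ipQ (pdu (pdv (pdu p)) x) (N x) = ipQ (pdv (pdu (pdu p)) x) (N x) := by
      rw [C2]
    rw [hC]
    have hM2' : ipQ (pdv (pdv (pdv p)) x) (N x) = -(ipQ (pdv (pdu (pdu p)) x) (N x)) := by
      linarith [M2]
    rw [hM2']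
    linarith [key2]
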